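/- Let Δ be a Hermitian operator on (ℂ^n)^{⊗k}. Then ∫⋯∫ (tr(Δ (|ψ_1⟩⟨ψ_1| ⊗ ⋯ ⊗ |ψ_k⟩⟨ψ_k|)))² dψ_1 ⋯ dψ_k = (n(n+1))^{−k} Σ_{S ⊆ [k]} ‖tr_S Δ‖_2², where each integral is over the uniform (unitarily invariant) probability measure on the unit vectors of ℂ^n. -/

import Mathlib

/-!
Expanding the square, `tr(Δ · prodProj ψ)²` is a sum over index tuples `a b c d` of `Δ_ab Δ_cd`
times a product over the sites `j` of quartic monomials in `ψ_j`, so by Fubini the integral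
reduces to the single-site moments `∫ ψ_b ψ̄_a ψ_d ψ̄_c dμ`. Unitary invariance determines these:
diagonal phase unitaries kill every moment except the pairings `a = b, c = d` and `a = d, c = b`,
a rotation in a coordinate plane gives `∫ |ψ_i|⁴ = 2 ∫ |ψ_i|² |ψ_j|²` with `∫ |ψ_i|⁴` independent
of `i`, and `‖ψ‖ = 1` fixes the normalisation: the moment is `(δ_ab δ_cd + δ_ad δ_cb) / (n(n+1))`.
Multiplying out the product over the sites of these two-term sums gives a sum over the set `S` of
sites where the first pairing is chosen, and the `S`-term is `tr((tr_S Δ)²) = ‖tr_S Δ‖₂²` because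
`Δ` is Hermitian.
-/

noncomputable section

open MeasureTheory Matrix

instance {n : ℕ} : MeasurableSpace (EuclideanSpace ℂ (Fin n)) := MeasurableSpace.comap WithLp.ofLp MeasurableSpace.pi
instance {n : ℕ} : BorelSpace (EuclideanSpace ℂ (Fin n)) := PiLp.borelSpace _

/-- The tensor product `|ψ_1⟩⟨ψ_1| ⊗ ⋯ ⊗ |ψ_k⟩⟨ψ_k|` of rank-one projectors, as a matrix
on `(ℂ^n)^{⊗k}` (indexed by functions `Fin k → Fin n`). -/
def prodProj {n k : ℕ} (ψ : Fin k → EuclideanSpace ℂ (Fin n)) :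
    Matrix (Fin k → Fin n) (Fin k → Fin n) ℂ :=
  Matrix.of fun a b => ∏ j, (ψ j (a j) * (starRingEnd ℂ) (ψ j (b j)))

/-- The partial trace over the tensor factors indexed by `S ⊆ {1,…,k}` of an operator
on `(ℂ^n)^{⊗k}`, an operator on the remaining factors. -/
def partialTrace {n k : ℕ} (S : Finset (Fin k))
    (X : Matrix (Fin k → Fin n) (Fin k → Fin n) ℂ) :
    Matrix ({j : Fin k // j ∉ S} → Fin n) ({j : Fin k // j ∉ S} → Fin n) ℂ :=
  Matrix.of fun a b => ∑ c : {j : Fin k // j ∈ S} → Fin n,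
    X (fun j => if h : j ∈ S then c ⟨j, h⟩ else a ⟨j, h⟩)
      (fun j => if h : j ∈ S then c ⟨j, h⟩ else b ⟨j, h⟩)

open scoped ComplexConjugate

section Combinatorics

variable {ι α R : Type*} [DecidableEq ι] [CommSemiring R]

theorem prod_boole_add_boole [Fintype ι] (p q : ι → Prop) [DecidablePred p] [DecidablePred q] :
    ∏ j, ((if p j then 1 else 0) + (if q j then 1 else 0) : R) =
      ∑ T : Finset ι, if (∀ j ∈ T, p j) ∧ ∀ j ∉ T, q j then 1 else 0 := by
  rw [Finset.prod_add, Finset.powerset_univ]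
  refine Finset.sum_congr rfl fun T _ => ?_
  rw [Finset.prod_boole, Finset.prod_boole, ite_zero_mul_ite_zero, one_mul]
  simp

theorem pairings_iff_eq_piecewise (T : Finset ι) (a b c d : ι → α) :
    ((∀ j ∈ T, a j = b j ∧ c j = d j) ∧ ∀ j ∉ T, a j = d j ∧ c j = b j) ↔
      b = T.piecewise a c ∧ d = T.piecewise c a := by
  simp only [funext_iff, Finset.piecewise]
  constructor
  · rintro ⟨hT, hTc⟩
    constructor <;> intro j <;> by_cases hj : j ∈ T <;> simp [hj, hT j, hTc j]
  · rintro ⟨hb, hd⟩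
    constructor <;> intro j hj <;> simp [hb j, hd j, hj]

theorem sum_mul_boole_piecewise [Fintype ι] [Fintype α] [DecidableEq α] (T : Finset ι)
    (X : Matrix (ι → α) (ι → α) R) :
    ∑ a, ∑ b, ∑ c, ∑ d,
        X a b * X c d * (if b = T.piecewise a c ∧ d = T.piecewise c a then 1 else 0) =
      ∑ a, ∑ c, X a (T.piecewise a c) * X c (T.piecewise c a) := by
  refine Finset.sum_congr rfl fun a _ => ?_
  rw [Finset.sum_comm]
  refine Finset.sum_congr rfl fun c _ => ?_
  simp [ite_and, Finset.sum_ite_eq']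

theorem sum_mul_prod_pairings [Fintype ι] [Fintype α] [DecidableEq α]
    (X : Matrix (ι → α) (ι → α) R) :
    ∑ a, ∑ b, ∑ c, ∑ d, X a b * X c d *
        ∏ j, ((if a j = b j ∧ c j = d j then 1 else 0) + (if a j = d j ∧ c j = b j then 1 else 0)) =
      ∑ T : Finset ι, ∑ a, ∑ c, X a (T.piecewise a c) * X c (T.piecewise c a) := by
  simp only [prod_boole_add_boole, pairings_iff_eq_piecewise, Finset.mul_sum,
    Finset.sum_comm (t := (Finset.univ : Finset (Finset ι)))]
  exact Finset.sum_congr rfl fun T _ => sum_mul_boole_piecewise T X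

end Combinatorics

section PartialTrace

variable {n k : ℕ}

theorem partialTrace_apply (T : Finset (Fin k)) (X : Matrix (Fin k → Fin n) (Fin k → Fin n) ℂ)
    (x y : {j // j ∉ T} → Fin n) :
    partialTrace T X x y = ∑ e, X ((Equiv.piEquivPiSubtypeProd (· ∈ T) fun _ => Fin n).symm (e, x))
      ((Equiv.piEquivPiSubtypeProd (· ∈ T) fun _ => Fin n).symm (e, y)) := rfl

theorem conjTranspose_partialTrace (T : Finset (Fin k))
    (X : Matrix (Fin k → Fin n) (Fin k → Fin n) ℂ) :
    (partialTrace T X)ᴴ = partialTrace T Xᴴ := by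
  ext x y
  simp [partialTrace_apply]

theorem piecewise_piEquivPiSubtypeProd_symm (T : Finset (Fin k)) (e f : {j // j ∈ T} → Fin n)
    (x y : {j // j ∉ T} → Fin n) :
    T.piecewise ((Equiv.piEquivPiSubtypeProd (· ∈ T) fun _ => Fin n).symm (e, x))
      ((Equiv.piEquivPiSubtypeProd (· ∈ T) fun _ => Fin n).symm (f, y)) =
    (Equiv.piEquivPiSubtypeProd (· ∈ T) fun _ => Fin n).symm (e, y) := by
  ext j
  by_cases hj : j ∈ T <;> simp [hj, Finset.piecewise]

theorem trace_partialTrace_mul_self (T : Finset (Fin k))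
    (X : Matrix (Fin k → Fin n) (Fin k → Fin n) ℂ) :
    (partialTrace T X * partialTrace T X).trace =
      ∑ a, ∑ c, X a (T.piecewise a c) * X c (T.piecewise c a) := by
  set σ := (Equiv.piEquivPiSubtypeProd (· ∈ T) fun _ => Fin n).symm
  simp only [← σ.sum_comp, Fintype.sum_prod_type, piecewise_piEquivPiSubtypeProd_symm, σ]
  simp only [Matrix.trace, Matrix.diag, Matrix.mul_apply, partialTrace_apply, Finset.sum_mul_sum]
  conv_rhs => rw [Finset.sum_comm]
  refine Finset.sum_congr rfl fun x _ => ?_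
  rw [Finset.sum_comm]
  exact Finset.sum_congr rfl fun e _ => Finset.sum_comm

end PartialTrace

theorem integral_finset_sum_of_continuous {X ι E : Type*} [TopologicalSpace X] [CompactSpace X]
    [MeasurableSpace X] [OpensMeasurableSpace X] [NormedAddCommGroup E] [NormedSpace ℝ E]
    (ν : Measure X) [IsFiniteMeasure ν] (s : Finset ι) {f : ι → X → E}
    (hf : ∀ i ∈ s, Continuous (f i)) :
    ∫ x, ∑ i ∈ s, f i x ∂ν = ∑ i ∈ s, ∫ x, f i x ∂ν :=
  integral_finsetSum s fun i hi => (hf i hi).integrable_of_hasCompactSupport (.of_compactSpace _)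

abbrev UnitSphere (n : ℕ) := Metric.sphere (0 : EuclideanSpace ℂ (Fin n)) 1

section SphereMoments

variable {n : ℕ}

def sphereMap (U : EuclideanSpace ℂ (Fin n) ≃ₗᵢ[ℂ] EuclideanSpace ℂ (Fin n)) (ψ : UnitSphere n) :
    UnitSphere n :=
  ⟨U ψ, by simp⟩

def IsUnitarilyInvariant (μ : Measure (UnitSphere n)) : Prop :=
  ∀ U, μ.map (sphereMap U) = μ

theorem integral_comp_sphereMap {μ : Measure (UnitSphere n)} (hμ : IsUnitarilyInvariant μ)
    (U : EuclideanSpace ℂ (Fin n) ≃ₗᵢ[ℂ] EuclideanSpace ℂ (Fin n))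
    {G : Type*} [NormedAddCommGroup G] [NormedSpace ℝ G] {f : UnitSphere n → G}
    (hf : Continuous f) : ∫ ψ, f (sphereMap U ψ) ∂μ = ∫ ψ, f ψ ∂μ := by
  have hU : Continuous (sphereMap U) := (U.continuous.comp continuous_subtype_val).subtype_mk _
  conv_rhs => rw [← hμ U]
  exact (integral_map hU.aemeasurable hf.aestronglyMeasurable).symm

-- `∫ (|ψ⟩⟨ψ|)_{ba} (|ψ⟩⟨ψ|)_{dc} dμ`, with the index order of the entries of `prodProj`.
def sphereMoment (μ : Measure (UnitSphere n)) (a b c d : Fin n) : ℂ :=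
  ∫ ψ : UnitSphere n, ψ.1 b * conj (ψ.1 a) * (ψ.1 d * conj (ψ.1 c)) ∂μ

variable {μ : Measure (UnitSphere n)}

theorem sphereMoment_comm (a b c d : Fin n) : sphereMoment μ a b c d = sphereMoment μ c d a b := by
  simp only [sphereMoment, mul_comm]

theorem sphereMoment_swap (a b c d : Fin n) : sphereMoment μ a b c d = sphereMoment μ a d c b := by
  simp only [sphereMoment]; congr 1; ext ψ; ring

theorem sphereMoment_eq_phase_mul (hμ : IsUnitarilyInvariant μ) (z : Fin n → ℂ)
    (hz : ∀ j, z j ∈ unitary ℂ) (a b c d : Fin n) :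
    sphereMoment μ a b c d = z b * conj (z a) * (z d * conj (z c)) * sphereMoment μ a b c d := by
  let U := LinearIsometryEquiv.piLpCongrRight 2 fun j => Unitary.mulLeft ℂ ℂ ⟨z j, hz j⟩
  conv_lhs => rw [sphereMoment, ← integral_comp_sphereMap hμ U (by fun_prop)]
  rw [sphereMoment, ← integral_const_mul]
  congr 1; ext ψ
  simp only [sphereMap, U, LinearIsometryEquiv.piLpCongrRight_apply, Unitary.mulLeft_apply, map_mul]
  ring

theorem sphereMoment_eq_zero (hμ : IsUnitarilyInvariant μ) {a b c d : Fin n}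
    (h : ¬(a = b ∧ c = d ∨ a = d ∧ c = b)) : sphereMoment μ a b c d = 0 := by
  have phase (l : Fin n) := sphereMoment_eq_phase_mul hμ (fun j => if j = l then Complex.I else 1)
    (fun j => by split_ifs <;> simp [Unitary.mem_iff]) a b c d
  -- The phase `I` on coordinate `l` multiplies the moment by `I ^ m`, where `m` is the number of
  -- occurrences of `l` among `b, d` minus that among `a, c`; for this `l`, `0 < |m| ≤ 2`.
  refine (mul_left_eq_self₀.1 (phase (if a = b ∨ a = d then c else a)).symm).resolve_left ?_
  clear phase
  split_ifs <;> subst_vars <;> simp_all [Complex.ext_iff] <;> norm_num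

def planeReflection {i j : Fin n} (hij : i ≠ j) {α β : ℝ} (hαβ : α ^ 2 + β ^ 2 = 1) :
    EuclideanSpace ℂ (Fin n) ≃ₗᵢ[ℂ] EuclideanSpace ℂ (Fin n) :=
  let R : EuclideanSpace ℂ (Fin n) →ₗ[ℂ] EuclideanSpace ℂ (Fin n) :=
    { toFun ψ := WithLp.toLp 2 fun l =>
        if l = i then α * ψ i + β * ψ j else if l = j then β * ψ i - α * ψ j else ψ l
      map_add' ψ φ := by ext l; simp only [PiLp.add_apply]; split_ifs <;> ring
      map_smul' c ψ := by
        ext l; simp only [PiLp.smul_apply, smul_eq_mul, RingHom.id_apply]; split_ifs <;> ring }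
  have hαβ' : (α : ℂ) ^ 2 + (β : ℂ) ^ 2 = 1 := by exact_mod_cast hαβ
  { LinearEquiv.ofInvolutive R fun ψ => by
      ext l
      simp only [R, LinearMap.coe_mk, AddHom.coe_mk, if_neg hij.symm]
      split_ifs with hi hj
      · subst hi; linear_combination ψ l * hαβ'
      · subst hj; linear_combination ψ l * hαβ'
      · rfl
    with
    norm_map' ψ := by
      have two_coords :
          ‖α * ψ i + β * ψ j‖ ^ 2 + ‖β * ψ i - α * ψ j‖ ^ 2 = ‖ψ i‖ ^ 2 + ‖ψ j‖ ^ 2 := by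
        simp only [Complex.sq_norm, Complex.normSq_apply, Complex.add_re, Complex.add_im,
          Complex.sub_re, Complex.sub_im, Complex.mul_re, Complex.mul_im, Complex.ofReal_re,
          Complex.ofReal_im]
        linear_combination ((ψ i).re ^ 2 + (ψ i).im ^ 2 + (ψ j).re ^ 2 + (ψ j).im ^ 2) * hαβ
      simp only [EuclideanSpace.norm_eq]
      congr 1
      rw [← sub_eq_zero, ← Finset.sum_sub_distrib]
      refine (Fintype.sum_eq_add i j hij fun l hl => ?_).trans ?_
      · simp [R, hl.1, hl.2]
      · simp [R, if_neg hij.symm]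
        linear_combination two_coords }

theorem planeReflection_apply_self {i j : Fin n} (hij : i ≠ j) {α β : ℝ} (hαβ : α ^ 2 + β ^ 2 = 1)
    (ψ : EuclideanSpace ℂ (Fin n)) : planeReflection hij hαβ ψ i = α * ψ i + β * ψ j := by
  simp [planeReflection]

theorem sphereMoment_planeReflection [IsFiniteMeasure μ] (hμ : IsUnitarilyInvariant μ)
    {i j : Fin n} (hij : i ≠ j) {α β : ℝ} (hαβ : α ^ 2 + β ^ 2 = 1) :
    sphereMoment μ i i i i = α ^ 4 * sphereMoment μ i i i i + β ^ 4 * sphereMoment μ j j j j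
      + 4 * α ^ 2 * β ^ 2 * sphereMoment μ i i j j := by
  let κ : Fin 2 → ℂ := ![α, β]
  let v : Fin 2 → Fin n := ![i, j]
  have expand (ψ : EuclideanSpace ℂ (Fin n)) :
      planeReflection hij hαβ ψ i * conj (planeReflection hij hαβ ψ i) *
        (planeReflection hij hαβ ψ i * conj (planeReflection hij hαβ ψ i)) =
      ∑ t : Fin 2 × Fin 2 × Fin 2 × Fin 2, κ t.1 * κ t.2.1 * κ t.2.2.1 * κ t.2.2.2 *
        (ψ (v t.2.1) * conj (ψ (v t.1)) * (ψ (v t.2.2.2) * conj (ψ (v t.2.2.1)))) := by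
    simp only [planeReflection_apply_self, Fintype.sum_prod_type, Fin.sum_univ_two, κ, v,
      Matrix.cons_val_zero, Matrix.cons_val_one, map_add, map_mul, Complex.conj_ofReal]
    ring
  have expanded : sphereMoment μ i i i i = ∑ t : Fin 2 × Fin 2 × Fin 2 × Fin 2,
      κ t.1 * κ t.2.1 * κ t.2.2.1 * κ t.2.2.2 *
        sphereMoment μ (v t.1) (v t.2.1) (v t.2.2.1) (v t.2.2.2) := by
    conv_lhs =>
      rw [sphereMoment, ← integral_comp_sphereMap hμ (planeReflection hij hαβ) (by fun_prop)]
    simp only [sphereMap, expand]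
    rw [integral_finset_sum_of_continuous _ _ fun _ _ => by fun_prop]
    simp only [sphereMoment, integral_const_mul]
  have hji := hij.symm
  simp (disch := simp [hij, hji]) only [Fintype.sum_prod_type, Fin.sum_univ_two, κ, v,
    Matrix.cons_val_zero, Matrix.cons_val_one, sphereMoment_eq_zero hμ] at expanded
  rw [sphereMoment_comm j j i i, sphereMoment_swap i j j i, sphereMoment_swap j i i j,
    sphereMoment_comm j j i i] at expanded
  linear_combination expanded

theorem sphereMoment_diag_eq [IsFiniteMeasure μ] (hμ : IsUnitarilyInvariant μ) {i j : Fin n}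
    (hij : i ≠ j) : sphereMoment μ i i i i = sphereMoment μ j j j j := by
  have hij' := sphereMoment_planeReflection hμ hij (α := 3 / 5) (β := 4 / 5) (by norm_num)
  have hji' := sphereMoment_planeReflection hμ hij.symm (α := 3 / 5) (β := 4 / 5) (by norm_num)
  rw [sphereMoment_comm j j i i] at hji'
  push_cast at hij' hji'
  linear_combination (25 / 32 : ℂ) * (hij' - hji')

theorem sphereMoment_diag_eq_two_mul [IsFiniteMeasure μ] (hμ : IsUnitarilyInvariant μ)
    {i j : Fin n} (hij : i ≠ j) : sphereMoment μ i i i i = 2 * sphereMoment μ i i j j := by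
  have hij' := sphereMoment_planeReflection hμ hij (α := 3 / 5) (β := 4 / 5) (by norm_num)
  have hji' := sphereMoment_planeReflection hμ hij.symm (α := 3 / 5) (β := 4 / 5) (by norm_num)
  rw [sphereMoment_comm j j i i] at hji'
  push_cast at hij' hji'
  linear_combination (425 / 288 : ℂ) * hij' + (25 / 36 : ℂ) * hji'

theorem sum_sphereMoment_self_self [IsProbabilityMeasure μ] :
    ∑ a, ∑ c, sphereMoment μ a a c c = 1 := by
  have unit (ψ : UnitSphere n) : ∑ a, ψ.1 a * conj (ψ.1 a) = 1 := by
    have h := inner_self_eq_norm_sq_to_K (𝕜 := ℂ) (ψ : EuclideanSpace ℂ (Fin n))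
    rw [PiLp.inner_apply, norm_eq_of_mem_sphere ψ] at h
    simpa [Complex.mul_conj'] using h
  calc ∑ a, ∑ c, sphereMoment μ a a c c
      = ∫ ψ : UnitSphere n, (∑ a, ψ.1 a * conj (ψ.1 a)) *
          ∑ c, ψ.1 c * conj (ψ.1 c) ∂μ := by
        simp only [Finset.sum_mul_sum, ← Fintype.sum_prod_type']
        rw [integral_finset_sum_of_continuous μ _ fun _ _ => by fun_prop]
        rfl
    _ = 1 := by simp [unit]

theorem sphereMoment_self_self [IsProbabilityMeasure μ] (hμ : IsUnitarilyInvariant μ)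
    (a c : Fin n) :
    sphereMoment μ a a c c = (1 + if a = c then 1 else 0) / (n * (n + 1)) := by
  set m := sphereMoment μ a a a a / 2 with hm_def
  have pattern (i j : Fin n) : sphereMoment μ i i j j = (1 + if i = j then 1 else 0) * m := by
    have diag (l : Fin n) : sphereMoment μ l l l l = sphereMoment μ a a a a := by
      rcases eq_or_ne l a with rfl | hla
      · rfl
      · exact sphereMoment_diag_eq hμ hla
    rcases eq_or_ne i j with rfl | hij
    · rw [diag, if_pos rfl, hm_def]; ring
    · rw [if_neg hij, hm_def, ← diag i, sphereMoment_diag_eq_two_mul hμ hij]; ring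
  have hm : (n * (n + 1) : ℂ) * m = 1 := by
    conv_rhs => rw [← sum_sphereMoment_self_self (μ := μ)]
    simp only [pattern, ← Finset.sum_mul, Finset.sum_add_distrib, Finset.sum_ite_eq,
      Finset.sum_const, Finset.card_univ, Fintype.card_fin, Finset.mem_univ, if_true, nsmul_eq_mul]
    ring
  have hn : (n * (n + 1) : ℂ) ≠ 0 := by
    norm_cast; exact (Nat.mul_pos a.pos n.succ_pos).ne'
  rw [pattern, eq_div_iff hn, mul_comm _ m]
  linear_combination (1 + if a = c then (1:ℂ) else 0) * hm

theorem sphereMoment_eq [IsProbabilityMeasure μ] (hμ : IsUnitarilyInvariant μ) (a b c d : Fin n) :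
    sphereMoment μ a b c d =
      ((if a = b ∧ c = d then 1 else 0) + (if a = d ∧ c = b then 1 else 0)) / (n * (n + 1)) := by
  by_cases h : a = b ∧ c = d ∨ a = d ∧ c = b
  · rcases h with ⟨rfl, rfl⟩ | ⟨rfl, rfl⟩
    · rw [sphereMoment_self_self hμ]
      by_cases hac : a = c <;> simp [hac, eq_comm]
    · rw [sphereMoment_swap, sphereMoment_self_self hμ]
      by_cases hac : a = c <;> simp [hac, eq_comm, add_comm]
  · rw [sphereMoment_eq_zero hμ h, if_neg (fun h' => h (.inl h')), if_neg (fun h' => h (.inr h'))]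
    simp

theorem integral_trace_mul_prodProj_sq {k : ℕ} [IsFiniteMeasure μ]
    (X : Matrix (Fin k → Fin n) (Fin k → Fin n) ℂ) :
    ∫ ψ : Fin k → UnitSphere n, (X * prodProj fun j => (ψ j).1).trace ^ 2
        ∂(Measure.pi fun _ => μ) =
      ∑ a, ∑ b, ∑ c, ∑ d, X a b * X c d * ∏ j, sphereMoment μ (a j) (b j) (c j) (d j) := by
  have expand (φ : Fin k → EuclideanSpace ℂ (Fin n)) : (X * prodProj φ).trace ^ 2 =
      ∑ a, ∑ b, ∑ c, ∑ d, X a b * X c d *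
        ∏ j, (φ j (b j) * conj (φ j (a j)) * (φ j (d j) * conj (φ j (c j)))) := by
    simp only [sq, Matrix.trace, Matrix.diag, Matrix.mul_apply, Finset.sum_mul_sum]
    refine Finset.sum_congr rfl fun a _ => ?_
    rw [Finset.sum_comm]
    simp only [prodProj, Matrix.of_apply, mul_mul_mul_comm (X _ _), ← Finset.prod_mul_distrib]
  have fubini (a b c d : Fin k → Fin n) :
      ∫ ψ : Fin k → UnitSphere n, ∏ j, ((ψ j).1 (b j) * conj ((ψ j).1 (a j)) *
        ((ψ j).1 (d j) * conj ((ψ j).1 (c j)))) ∂(Measure.pi fun _ => μ) =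
      ∏ j, sphereMoment μ (a j) (b j) (c j) (d j) :=
    integral_fintype_prod_eq_prod fun j (ψ : UnitSphere n) =>
      ψ.1 (b j) * conj (ψ.1 (a j)) * (ψ.1 (d j) * conj (ψ.1 (c j)))
  simp only [expand, ← Fintype.sum_prod_type']
  rw [integral_finset_sum_of_continuous _ _ fun _ _ => by fun_prop]
  simp only [Fintype.sum_prod_type, integral_const_mul, fubini]

end SphereMoments

/-- Multipartite second-moment formula: if `μ` is the uniform (unitarily invariant)
probability measure on the unit sphere of `ℂ^n` and `Δ` is a Hermitian operator on
`(ℂ^n)^{⊗k}`, then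
`∫⋯∫ (tr(Δ(|ψ_1⟩⟨ψ_1| ⊗ ⋯ ⊗ |ψ_k⟩⟨ψ_k|)))² dψ_1⋯dψ_k
   = (n(n+1))^{-k} ∑_{S ⊆ [k]} ‖tr_S Δ‖_2²`. -/
theorem integral_trace_sq_multipartite {n k : ℕ}
    (μ : Measure (Metric.sphere (0 : EuclideanSpace ℂ (Fin n)) 1))
    [IsProbabilityMeasure μ]
    (hinv : ∀ U : EuclideanSpace ℂ (Fin n) ≃ₗᵢ[ℂ] EuclideanSpace ℂ (Fin n),
      Measure.map (fun ψ : Metric.sphere (0 : EuclideanSpace ℂ (Fin n)) 1 =>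
        (⟨U ψ.1, by
          rw [mem_sphere_zero_iff_norm, U.norm_map, ← mem_sphere_zero_iff_norm]
          exact ψ.2⟩ : Metric.sphere (0 : EuclideanSpace ℂ (Fin n)) 1)) μ = μ)
    (Δ : Matrix (Fin k → Fin n) (Fin k → Fin n) ℂ) (hΔ : Δ.IsHermitian) :
    ∫ ψ : Fin k → Metric.sphere (0 : EuclideanSpace ℂ (Fin n)) 1,
        ((Δ * prodProj fun j => (ψ j : EuclideanSpace ℂ (Fin n))).trace) ^ 2
        ∂(Measure.pi fun _ => μ)
      = (∑ S : Finset (Fin k), ((partialTrace S Δ)ᴴ * partialTrace S Δ).trace)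
          / ((n : ℂ) * ((n : ℂ) + 1)) ^ k := by
  calc _ = ∑ a, ∑ b, ∑ c, ∑ d, Δ a b * Δ c d * ∏ j, sphereMoment μ (a j) (b j) (c j) (d j) :=
        integral_trace_mul_prodProj_sq Δ
    _ = (∑ a, ∑ b, ∑ c, ∑ d, Δ a b * Δ c d * ∏ j,
          ((if a j = b j ∧ c j = d j then 1 else 0) + (if a j = d j ∧ c j = b j then 1 else 0))) /
            ((n : ℂ) * ((n : ℂ) + 1)) ^ k := by
        simp only [sphereMoment_eq hinv, Finset.prod_div_distrib, Finset.prod_const,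
          Finset.card_univ, Fintype.card_fin, mul_div_assoc', Finset.sum_div]
    _ = _ := by
        rw [sum_mul_prod_pairings]
        simp only [conjTranspose_partialTrace, hΔ.eq, trace_partialTrace_mul_self]
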